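/- arXiv:2103.10837 — 2 statements merged into one kernel-verified Lean document; each statement's English description precedes it below -/
import Mathlib

section
/- Let n be a positive integer and M a complex matrix indexed by (Fin n → Fin 2). Then M is Hermitian (M† = M) if and only if for every α : Fin n → Fin 4 the complex number tr(M · P_α) is real (has zero imaginary part). In particular, a Hermitian matrix expands in the Pauli-string basis with real coefficients. -/
open scoped Matrix

/-- The four Pauli matrices `σ_0, σ_1, σ_2, σ_3`. -/
noncomputable def pauli : Fin 4 → Matrix (Fin 2) (Fin 2) ℂ
  | 0 => !![1, 0; 0, 1]
  | 1 => !![0, 1; 1, 0]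
  | 2 => !![0, -Complex.I; Complex.I, 0]
  | 3 => !![1, 0; 0, -1]

/-- The `n`-qubit Pauli string `P_α = σ_{α 1} ⊗ ⋯ ⊗ σ_{α n}`. -/
noncomputable def pauliString (n : ℕ) (α : Fin n → Fin 4) :
    Matrix (Fin n → Fin 2) (Fin n → Fin 2) ℂ :=
  Matrix.of fun i j => ∏ k, pauli (α k) (i k) (j k)

lemma pauli_conj (a : Fin 4) (b c : Fin 2) :
    (starRingEnd ℂ) (pauli a b c) = pauli a c b := by
  fin_cases a <;> fin_cases b <;> fin_cases c <;> simp [pauli]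

lemma pauli_complete (b c d e : Fin 2) :
    ∑ a : Fin 4, pauli a b c * pauli a d e = if b = e ∧ c = d then 2 else 0 := by
  fin_cases b <;> fin_cases c <;> fin_cases d <;> fin_cases e <;>
    simp [pauli, Fin.sum_univ_four] <;> norm_num

lemma pauliString_herm (n : ℕ) (α : Fin n → Fin 4) :
    (pauliString n α)ᴴ = pauliString n α := by
  ext i j
  simp [Matrix.conjTranspose_apply, pauliString, map_prod, pauli_conj]

lemma string_complete (n : ℕ) (x y i j : Fin n → Fin 2) :
    ∑ α : Fin n → Fin 4, pauliString n α y x * pauliString n α i j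
      = if y = j ∧ x = i then (2 : ℂ) ^ n else 0 := by
  classical
  have h1 : ∀ α : Fin n → Fin 4, pauliString n α y x * pauliString n α i j
      = ∏ k, (pauli (α k) (y k) (x k) * pauli (α k) (i k) (j k)) := by
    intro α; simp [pauliString, Finset.prod_mul_distrib]
  simp_rw [h1]
  have h2 := Finset.prod_univ_sum (fun _ : Fin n => (Finset.univ : Finset (Fin 4)))
      (fun k a => pauli a (y k) (x k) * pauli a (i k) (j k))
  rw [Fintype.piFinset_univ] at h2
  rw [← h2]
  simp_rw [pauli_complete]
  by_cases h : y = j ∧ x = i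
  · obtain ⟨hy, hx⟩ := h
    subst hy; subst hx
    simp [Finset.prod_const]
  · rw [if_neg h]
    rcases not_and_or.mp h with h' | h' <;>
      obtain ⟨k, hk⟩ := Function.ne_iff.mp h' <;>
      exact Finset.prod_eq_zero (Finset.mem_univ k) (by simp [hk])

lemma key (n : ℕ) (N : Matrix (Fin n → Fin 2) (Fin n → Fin 2) ℂ) (i j : Fin n → Fin 2) :
    ∑ α : Fin n → Fin 4, (N * pauliString n α).trace * pauliString n α i j
      = (2 : ℂ) ^ n * N i j := by
  classical
  have htr : ∀ α : Fin n → Fin 4,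
      (N * pauliString n α).trace = ∑ x, ∑ y, N x y * pauliString n α y x := by
    intro α; simp [Matrix.trace, Matrix.diag, Matrix.mul_apply]
  simp_rw [htr, Finset.sum_mul]
  rw [Finset.sum_comm]
  have : ∀ x, ∑ α : Fin n → Fin 4, ∑ y, N x y * pauliString n α y x * pauliString n α i j
      = ∑ y, N x y * (if y = j ∧ x = i then (2 : ℂ) ^ n else 0) := by
    intro x
    rw [Finset.sum_comm]
    refine Finset.sum_congr rfl fun y _ => ?_
    rw [← string_complete n x y i j, Finset.mul_sum]
    simp [mul_assoc]
  simp_rw [this]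
  simp [Finset.sum_ite_eq, mul_ite, ite_and]
  ring

/-- `M` is Hermitian iff all its Pauli-string trace coefficients `tr(M · P_α)` are real. -/
theorem stmt6 (n : ℕ) (hn : 0 < n) (M : Matrix (Fin n → Fin 2) (Fin n → Fin 2) ℂ) :
    Mᴴ = M ↔ ∀ α : Fin n → Fin 4, ((M * pauliString n α).trace).im = 0 := by
  constructor
  · intro hM α
    rw [← Complex.conj_eq_iff_im]
    have h := Matrix.trace_conjTranspose (M * pauliString n α)
    rw [Matrix.conjTranspose_mul, pauliString_herm, hM, Matrix.trace_mul_comm] at h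
    exact h.symm
  · intro h
    have hN : ∀ α : Fin n → Fin 4, ((Mᴴ - M) * pauliString n α).trace = 0 := by
      intro α
      have h1 : Mᴴ * pauliString n α = (pauliString n α * M)ᴴ := by
        rw [Matrix.conjTranspose_mul, pauliString_herm]
      rw [Matrix.sub_mul, Matrix.trace_sub, h1, Matrix.trace_conjTranspose,
        Matrix.trace_mul_comm]
      rw [show star (M * pauliString n α).trace = (M * pauliString n α).trace from
        Complex.conj_eq_iff_im.mpr (h α), sub_self]
    ext i j
    have hk := key n (Mᴴ - M) i j
    simp only [hN, zero_mul, Finset.sum_const_zero] at hk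
    have h2 : (2 : ℂ) ^ n ≠ 0 := by simp
    have := (mul_eq_zero.mp hk.symm).resolve_left h2
    have := sub_eq_zero.mp (by simpa [Matrix.sub_apply] using this)
    simpa using this
end

section
/- (Supervised-loss derivative identity.) Let A and B be finite types, S a positive integer, and for each u = 1, …, S let ρ̃_u be a Hermitian complex matrix indexed by A × B and φ_u : B → ℂ a unit vector with associated projection |φ_u⟩⟨φ_u| having entries φ_u b · conj(φ_u b'). Let U_1, …, U_m be unitary matrices and K_1, …, K_m Hermitian matrices, all indexed by A × B. For ε ∈ ℝ define C(ε) = (exp(iεK_m)U_m)⋯(exp(iεK_1)U_1) and ρ_u(ε) = tr_A( C(ε) ρ̃_u C(ε)† ). Set W_j = U_j⋯U_1 and V_j = U_m⋯U_{j+1}. Then the supervised loss ε ↦ (1/S) Σ_{u=1}^{S} tr( |φ_u⟩⟨φ_u| · ρ_u(ε) ) has derivative at ε = 0 equal to (i/S) · Σ_{u=1}^{S} Σ_{j=1}^{m} tr( M_{j,{u}} · K_j ), where M_{j,{u}} = [ W_j ρ̃_u W_j† , V_j† (1_A ⊗ |φ_u⟩⟨φ_u|) V_j ] and [X,Y] =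 XY − YX. -/
open scoped Matrix Kronecker

/-- The partial trace over `A` of a matrix indexed by `A × B`. -/
noncomputable def ptrace (A B : Type*) [Fintype A]
    (X : Matrix (A × B) (A × B) ℂ) : Matrix B B ℂ :=
  Matrix.of fun b b' => ∑ a, X (a, b) (a, b')

/-- The rank-one projection `|φ⟩⟨φ|` with entries `φ b · conj (φ b')`. -/
noncomputable def vecProj {ι : Type*} (φ : ι → ℂ) : Matrix ι ι ℂ :=
  Matrix.of fun b b' => φ b * (starRingEnd ℂ) (φ b')

/-- `C(ε) = (exp(iεK_m)U_m)⋯(exp(iεK_1)U_1)` (largest index leftmost). -/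
noncomputable def Cfun {ι : Type*} [Fintype ι] [DecidableEq ι] {m : ℕ}
    (K U : Fin m → Matrix ι ι ℂ) (ε : ℝ) : Matrix ι ι ℂ :=
  (List.ofFn fun j => NormedSpace.exp (Complex.I • ((ε : ℂ) • K j)) * U j).reverse.prod

/-- `W_j = U_j⋯U_1`. -/
noncomputable def Wmat {ι : Type*} [Fintype ι] [DecidableEq ι] {m : ℕ}
    (U : Fin m → Matrix ι ι ℂ) (j : Fin m) : Matrix ι ι ℂ :=
  ((List.ofFn U).take ((j : ℕ) + 1)).reverse.prod

/-- `V_j = U_m⋯U_{j+1}` (with `V_m = 1`). -/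
noncomputable def Vmat {ι : Type*} [Fintype ι] [DecidableEq ι] {m : ℕ}
    (U : Fin m → Matrix ι ι ℂ) (j : Fin m) : Matrix ι ι ℂ :=
  ((List.ofFn U).drop ((j : ℕ) + 1)).reverse.prod

/-- The network output `ρ(ε) = tr_A(C(ε) ρ̃ C(ε)†)`. -/
noncomputable def rhoOut {A B : Type*} [Fintype A] [Fintype B] [DecidableEq A] [DecidableEq B]
    {m : ℕ} (K U : Fin m → Matrix (A × B) (A × B) ℂ)
    (ρ : Matrix (A × B) (A × B) ℂ) (ε : ℝ) : Matrix B B ℂ :=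
  ptrace A B (Cfun K U ε * ρ * (Cfun K U ε)ᴴ)

/-- The commutator `[X, Y] = XY − YX`. -/
noncomputable def matComm {ι : Type*} [Fintype ι] (X Y : Matrix ι ι ℂ) : Matrix ι ι ℂ :=
  X * Y - Y * X

/-- `M_j = [W_j ρ W_j†, V_j† (1_A ⊗ P) V_j]`. -/
noncomputable def Mmat {A B : Type*} [Fintype A] [Fintype B] [DecidableEq A] [DecidableEq B]
    {m : ℕ} (U : Fin m → Matrix (A × B) (A × B) ℂ)
    (ρ : Matrix (A × B) (A × B) ℂ) (P : Matrix B B ℂ) (j : Fin m) :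
    Matrix (A × B) (A × B) ℂ :=
  matComm (Wmat U j * ρ * (Wmat U j)ᴴ)
    ((Vmat U j)ᴴ * ((1 : Matrix A A ℂ) ⊗ₖ P) * Vmat U j)

/-! The circuit at `ε = 0` is `T = U_m⋯U_1`, and by the product rule over the layers
`C'(0) = i Σ_j V_j K_j W_j`, each layer `exp(iεK_j) U_j` having derivative `i K_j U_j` at `0`.
Moving the partial trace onto the observable, `tr(P · tr_A X) = tr((1_A ⊗ P) X)`, the derivative of
each loss term is `tr((1_A ⊗ P)(C'(0) ρ T† + T ρ C'(0)†))`. Writing `T = V_j W_j` and cycling the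
trace turns the `j`-th summand into `i · tr([W_j ρ W_j†, V_j† (1_A ⊗ P) V_j] K_j)`, because `K_j`
is Hermitian. -/

-- The operator norm makes square matrices a C⋆-algebra, so `HasDerivAt.star` applies.
open scoped Matrix.Norms.L2Operator

section ListProd

variable {R : Type*} [NormedRing R] [NormedAlgebra ℝ R]

theorem hasDerivAt_prod_reverse_ofFn {m : ℕ} {f : Fin m → ℝ → R} {f' : Fin m → R} {x : ℝ}
    (hf : ∀ j, HasDerivAt (f j) (f' j) x) :
    HasDerivAt (fun ε => (List.ofFn (f · ε)).reverse.prod)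
      (∑ j : Fin m, ((List.ofFn (f · x)).drop (j + 1)).reverse.prod * f' j *
        ((List.ofFn (f · x)).take j).reverse.prod) x := by
  induction m with
  | zero => simpa using hasDerivAt_const x (1 : R)
  | succ m ih =>
    have := (ih fun j => hf j.succ).fun_mul (hf 0)
    simp only [List.ofFn_succ, List.reverse_cons, List.prod_append, List.prod_singleton]
    convert this using 1
    rw [Fin.sum_univ_succ, Finset.sum_mul, add_comm]
    simp [List.drop_succ_cons, List.take_succ_cons, mul_assoc]

end ListProd

section TraceCycle

variable {ι : Type*} [Fintype ι]

theorem trace_mul_variation_eq_I_mul_matComm (Q V W K ρ : Matrix ι ι ℂ) (hK : Kᴴ = K) :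
    (Q * (Complex.I • (V * K * W) * ρ * (V * W)ᴴ
      + (V * W) * ρ * (Complex.I • (V * K * W))ᴴ)).trace
    = Complex.I * (matComm (W * ρ * Wᴴ) (Vᴴ * Q * V) * K).trace := by
  have hcycle₁ := Matrix.trace_mul_comm (Q * V * K) (W * ρ * Wᴴ * Vᴴ)
  have hcycle₂ := Matrix.trace_mul_comm (Q * V * W * ρ * Wᴴ * K) Vᴴ
  simp only [Matrix.mul_assoc] at hcycle₁ hcycle₂
  simp only [matComm, Matrix.conjTranspose_smul, Matrix.conjTranspose_mul, hK, Complex.star_def,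
    Complex.conj_I, Matrix.smul_mul, Matrix.mul_smul, Matrix.mul_add, Matrix.sub_mul,
    Matrix.trace_add, Matrix.trace_sub, Matrix.trace_smul, Matrix.mul_assoc, hcycle₁, hcycle₂,
    smul_eq_mul]
  ring

end TraceCycle

section Circuit

variable {ι : Type*} [Fintype ι] [DecidableEq ι] {m : ℕ}

theorem Wmat_eq_mul_prod_take (U : Fin m → Matrix ι ι ℂ) (j : Fin m) :
    Wmat U j = U j * ((List.ofFn U).take j).reverse.prod := by
  simp [Wmat, List.take_add_one]

theorem Vmat_mul_Wmat (U : Fin m → Matrix ι ι ℂ) (j : Fin m) :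
    Vmat U j * Wmat U j = (List.ofFn U).reverse.prod := by
  rw [Vmat, Wmat, ← List.prod_append, ← List.reverse_append, List.take_append_drop]

theorem Cfun_zero (K U : Fin m → Matrix ι ι ℂ) : Cfun K U 0 = (List.ofFn U).reverse.prod := by
  simp [Cfun]

theorem hasDerivAt_Cfun (K U : Fin m → Matrix ι ι ℂ) :
    HasDerivAt (Cfun K U) (∑ j, Complex.I • (Vmat U j * K j * Wmat U j)) 0 := by
  have hlayer : ∀ j, HasDerivAt
      (fun ε : ℝ => NormedSpace.exp (Complex.I • ((ε : ℂ) • K j)) * U j) (Complex.I • K j * U j) 0 := by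
    intro j
    have hsmul : (fun ε : ℝ => NormedSpace.exp (Complex.I • ((ε : ℂ) • K j)) * U j)
        = fun ε : ℝ => NormedSpace.exp (ε • (Complex.I • K j)) * U j := by
      funext ε
      rw [Complex.coe_smul, smul_comm]
    rw [hsmul]
    simpa using (hasDerivAt_exp_smul_const (Complex.I • K j) (0 : ℝ)).mul_const (U j)
  refine (hasDerivAt_prod_reverse_ofFn hlayer).congr_deriv (Finset.sum_congr rfl fun j _ => ?_)
  simp [Vmat, Wmat_eq_mul_prod_take, mul_assoc]

theorem hasDerivAt_trace_mul_conj {C : ℝ → Matrix ι ι ℂ} {C' : Matrix ι ι ℂ} {x : ℝ}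
    (hC : HasDerivAt C C' x) (Q ρ : Matrix ι ι ℂ) :
    HasDerivAt (fun ε => (Q * (C ε * ρ * (C ε)ᴴ)).trace)
      (Q * (C' * ρ * (C x)ᴴ + C x * ρ * C'ᴴ)).trace x :=
  ((Matrix.traceLinearMap ι ℂ ℂ).restrictScalars ℝ).toContinuousLinearMap.hasFDerivAt
    |>.comp_hasDerivAt x (((hC.mul_const ρ).mul hC.star).const_mul Q)

end Circuit

section PartialTrace

variable {A B : Type*} [Fintype A] [Fintype B] [DecidableEq A]

theorem trace_mul_ptrace (P : Matrix B B ℂ) (X : Matrix (A × B) (A × B) ℂ) :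
    (P * ptrace A B X).trace = ((1 : Matrix A A ℂ) ⊗ₖ P * X).trace := by
  simp only [Matrix.trace, ptrace, Matrix.diag_apply, Matrix.mul_apply, Matrix.of_apply,
    Finset.mul_sum, Matrix.kroneckerMap_apply, Matrix.one_apply, ite_mul, one_mul, zero_mul,
    Fintype.sum_prod_type, Finset.sum_ite_irrel, Finset.sum_const_zero, Finset.sum_ite_eq,
    Finset.mem_univ, if_true]
  simp_rw [Finset.sum_comm (γ := A)]

variable [DecidableEq B]

theorem hasDerivAt_trace_mul_rhoOut {m : ℕ} (K U : Fin m → Matrix (A × B) (A × B) ℂ)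
    (hK : ∀ j, (K j)ᴴ = K j) (ρ : Matrix (A × B) (A × B) ℂ) (P : Matrix B B ℂ) :
    HasDerivAt (fun ε => (P * rhoOut K U ρ ε).trace)
      (Complex.I * ∑ j, (Mmat U ρ P j * K j).trace) 0 := by
  simp only [rhoOut, trace_mul_ptrace]
  refine (hasDerivAt_trace_mul_conj (hasDerivAt_Cfun K U) _ ρ).congr_deriv ?_
  rw [Cfun_zero, Matrix.conjTranspose_sum, Finset.sum_mul, Finset.sum_mul, Finset.mul_sum,
    ← Finset.sum_add_distrib, Matrix.mul_sum, Matrix.trace_sum, Finset.mul_sum]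
  refine Finset.sum_congr rfl fun j _ => ?_
  rw [← Vmat_mul_Wmat U j, Mmat, trace_mul_variation_eq_I_mul_matComm _ _ _ _ _ (hK j)]

end PartialTrace

theorem stmt17_general (A B : Type*) [Fintype A] [Fintype B]
    [DecidableEq A] [DecidableEq B] (S m : ℕ)
    (ρt : Fin S → Matrix (A × B) (A × B) ℂ)
    (φ : Fin S → B → ℂ)
    (U K : Fin m → Matrix (A × B) (A × B) ℂ)
    (hK : ∀ j, (K j)ᴴ = K j) :
    HasDerivAt
      (fun ε : ℝ => (1 / (S : ℂ)) * ∑ u, (vecProj (φ u) * rhoOut K U (ρt u) ε).trace)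
      ((Complex.I / (S : ℂ)) * ∑ u, ∑ j,
        (Mmat U (ρt u) (vecProj (φ u)) j * K j).trace) 0 := by
  have hloss := HasDerivAt.fun_sum (u := Finset.univ) fun u _ =>
    hasDerivAt_trace_mul_rhoOut K U hK (ρt u) (vecProj (φ u))
  refine (hloss.const_mul (1 / (S : ℂ))).congr_deriv ?_
  rw [← Finset.mul_sum]
  ring

/-- Supervised-loss derivative identity: the derivative at `ε = 0` of
`ε ↦ (1/S) Σ_u tr(|φ_u⟩⟨φ_u| · ρ_u(ε))` equals `(i/S) · Σ_u Σ_j tr(M_{j,{u}} · K_j)`. -/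
theorem stmt17 (A B : Type*) [Fintype A] [Fintype B]
    [DecidableEq A] [DecidableEq B] (S m : ℕ) (hS : 0 < S)
    (ρt : Fin S → Matrix (A × B) (A × B) ℂ) (hρt : ∀ u, (ρt u)ᴴ = ρt u)
    (φ : Fin S → B → ℂ) (hφ : ∀ u, ∑ b, Complex.normSq (φ u b) = 1)
    (U K : Fin m → Matrix (A × B) (A × B) ℂ)
    (hU : ∀ j, U j * (U j)ᴴ = 1 ∧ (U j)ᴴ * U j = 1)
    (hK : ∀ j, (K j)ᴴ = K j) :
    HasDerivAt
      (fun ε : ℝ => (1 / (S : ℂ)) * ∑ u, (vecProj (φ u) * rhoOut K U (ρt u) ε).trace)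
      ((Complex.I / (S : ℂ)) * ∑ u, ∑ j,
        (Mmat U (ρt u) (vecProj (φ u)) j * K j).trace) 0 :=
  stmt17_general A B S m ρt φ U K hK
end
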